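/- Let G be a compact Hausdorff topological group with identity e and let g ∈ G. The probability measure μ = (1/2)(δ_e + δ_g) has a generalized inverse in P(G) (i.e., there exists ν ∈ P(G) with μ ∗ ν ∗ μ = μ) if and only if g² = e. -/

import Mathlib

/-! If `μ ∗ ν ∗ μ = μ`, then `μ`-almost every point lies in `{1, g}`, hence `ν`-almost every `z`
satisfies `z, g z, g z g ∈ {1, g}`; any such `z` forces `g² = 1`. Conversely, if `g² = 1` then `μ`
is idempotent, so `ν = μ` works, and `μ` is regular because it lives on a finite set.

Multiplication need not be jointly measurable on `G × G` (the Borel σ-algebra of the product can be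
larger than the product σ-algebra), so convolutions with a Dirac factor are computed directly rather
than with Mathlib's `dirac_mconv`, which assumes `MeasurableMul₂`. -/

open MeasureTheory
open scoped MeasureTheory ENNReal

namespace MeasureTheory.Measure

section Convolution

variable {M : Type*} [Monoid M] [MeasurableSpace M] [MeasurableMul M] [MeasurableSingletonClass M]

lemma aemeasurable_mul_dirac_prod (x : M) (ν : Measure M) [SFinite ν] :
    AEMeasurable (fun p : M × M ↦ p.1 * p.2) ((dirac x).prod ν) := by
  rw [dirac_prod]
  exact (measurableEmbedding_prodMk_left x).aemeasurable_map_iff.mpr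
    (measurable_const_mul x).aemeasurable

lemma aemeasurable_mul_prod_dirac (ν : Measure M) [SFinite ν] (x : M) :
    AEMeasurable (fun p : M × M ↦ p.1 * p.2) (ν.prod (dirac x)) := by
  rw [prod_dirac]
  exact (measurableEmbedding_prod_mk_right x).aemeasurable_map_iff.mpr
    (measurable_mul_const x).aemeasurable

lemma dirac_mconv' (x : M) (ν : Measure M) [SFinite ν] :
    dirac x ∗ₘ ν = ν.map (x * ·) := by
  have h := aemeasurable_mul_dirac_prod x ν
  rw [dirac_prod] at h
  rw [mconv, dirac_prod, h.map_map_of_aemeasurable measurable_prodMk_left.aemeasurable]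
  rfl

lemma mconv_dirac' (ν : Measure M) [SFinite ν] (x : M) :
    ν ∗ₘ dirac x = ν.map (· * x) := by
  have h := aemeasurable_mul_prod_dirac ν x
  rw [prod_dirac] at h
  rw [mconv, prod_dirac, h.map_map_of_aemeasurable measurable_prodMk_right.aemeasurable]
  rfl

lemma smul_dirac_add_smul_dirac_mconv (a b : ℝ≥0∞) (x y : M) (ν : Measure M) [SFinite ν] :
    (a • dirac x + b • dirac y) ∗ₘ ν = a • ν.map (x * ·) + b • ν.map (y * ·) := by
  rw [← dirac_mconv', ← dirac_mconv', mconv, add_prod,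
    prod_smul_left, prod_smul_left,
    AEMeasurable.map_add₀ ((aemeasurable_mul_dirac_prod x ν).smul_measure a)
      ((aemeasurable_mul_dirac_prod y ν).smul_measure b), Measure.map_smul, Measure.map_smul]
  rfl

lemma mconv_smul_dirac_add_smul_dirac (ν : Measure M) [SFinite ν] (a b : ℝ≥0∞) (x y : M) :
    ν ∗ₘ (a • dirac x + b • dirac y) = a • ν.map (· * x) + b • ν.map (· * y) := by
  rw [← mconv_dirac', ← mconv_dirac', mconv, prod_add,
    prod_smul_right, prod_smul_right,
    AEMeasurable.map_add₀ ((aemeasurable_mul_prod_dirac ν x).smul_measure a)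
      ((aemeasurable_mul_prod_dirac ν y).smul_measure b), Measure.map_smul, Measure.map_smul]
  rfl

lemma ae_smul_dirac_add_smul_dirac_mconv_iff {a b : ℝ≥0∞} (ha : a ≠ 0) (hb : b ≠ 0) (x y : M)
    (ν : Measure M) [SFinite ν] {p : M → Prop} (hp : MeasurableSet {z | p z}) :
    (∀ᵐ z ∂(a • dirac x + b • dirac y) ∗ₘ ν, p z) ↔
      (∀ᵐ z ∂ν, p (x * z)) ∧ ∀ᵐ z ∂ν, p (y * z) := by
  rw [smul_dirac_add_smul_dirac_mconv, ae_add_measure_iff, ae_ennreal_smul_measure_iff ha,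
    ae_ennreal_smul_measure_iff hb, ae_map_iff (measurable_const_mul x).aemeasurable hp,
    ae_map_iff (measurable_const_mul y).aemeasurable hp]

lemma ae_mconv_smul_dirac_add_smul_dirac_iff {a b : ℝ≥0∞} (ha : a ≠ 0) (hb : b ≠ 0)
    (ν : Measure M) [SFinite ν] (x y : M) {p : M → Prop} (hp : MeasurableSet {z | p z}) :
    (∀ᵐ z ∂ν ∗ₘ (a • dirac x + b • dirac y), p z) ↔
      (∀ᵐ z ∂ν, p (z * x)) ∧ ∀ᵐ z ∂ν, p (z * y) := by
  rw [mconv_smul_dirac_add_smul_dirac, ae_add_measure_iff, ae_ennreal_smul_measure_iff ha,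
    ae_ennreal_smul_measure_iff hb, ae_map_iff (measurable_mul_const x).aemeasurable hp,
    ae_map_iff (measurable_mul_const y).aemeasurable hp]

end Convolution

theorem Regular.of_finite_of_measure_compl_eq_zero {X : Type*} [TopologicalSpace X] [T1Space X]
    [MeasurableSpace X] {μ : Measure X} [IsFiniteMeasure μ] {s : Set X} (hs : s.Finite)
    (hμs : μ sᶜ = 0) : μ.Regular where
  outerRegular := fun A _ r hr ↦ by
    refine ⟨A ∪ sᶜ, Set.subset_union_left, ?_, ?_⟩
    · rw [← compl_compl A, ← Set.compl_inter, ← Set.sdiff_eq_compl_inter]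
      exact hs.sdiff.isClosed.isOpen_compl
    · calc μ (A ∪ sᶜ) ≤ μ A + μ sᶜ := measure_union_le _ _
        _ < r := by rwa [hμs, add_zero]
  innerRegular := fun U _ r hr ↦
    ⟨U ∩ s, Set.inter_subset_left, (hs.inter_of_right U).isCompact, by
      rwa [measure_inter_conull hμs]⟩

theorem half_dirac_add_half_dirac_mconv_self {G : Type*} [Group G] [MeasurableSpace G]
    [MeasurableMul G] [MeasurableSingletonClass G] {g : G} (hg : g ^ 2 = 1) :
    ((2⁻¹ : ℝ≥0∞) • dirac 1 + (2⁻¹ : ℝ≥0∞) • dirac g) ∗ₘ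
        ((2⁻¹ : ℝ≥0∞) • dirac 1 + (2⁻¹ : ℝ≥0∞) • dirac g) =
      (2⁻¹ : ℝ≥0∞) • dirac 1 + (2⁻¹ : ℝ≥0∞) • dirac g := by
  rw [smul_dirac_add_smul_dirac_mconv, Measure.map_add _ _ (measurable_const_mul g),
    Measure.map_smul, Measure.map_smul, map_dirac' (measurable_const_mul g),
    map_dirac' (measurable_const_mul g), mul_one, ← sq, hg, add_comm (_ • dirac g)]
  simp only [one_mul, Measure.map_id', ← add_smul, ENNReal.inv_two_add_inv_two, one_smul]

end MeasureTheory.Measure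

theorem sq_eq_one_of_mem_pair {G : Type*} [Group G] {g z : G} (hz : z = 1 ∨ z = g)
    (hgz : g * z = 1 ∨ g * z = g) (hgzg : g * z * g = 1 ∨ g * z * g = g) : g ^ 2 = 1 := by
  have hsq : g * g = 1 ∨ g * g = g := by
    rcases hz with rfl | rfl
    · simpa using hgzg
    · exact hgz
  rcases hsq with h | h
  · rw [sq, h]
  · rw [mul_eq_left.1 h, one_pow]

theorem half_dirac_regular_iff_sq_eq_one_general {G : Type*} [Group G] [TopologicalSpace G]
    [IsTopologicalGroup G] [T2Space G] [MeasurableSpace G] [BorelSpace G]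
    (g : G) (μ : Measure G)
    (hμ : μ = (2⁻¹ : ℝ≥0∞) • Measure.dirac (1 : G) + (2⁻¹ : ℝ≥0∞) • Measure.dirac g) :
    (∃ ν : Measure G, IsProbabilityMeasure ν ∧ ν.Regular ∧ (μ ∗ₘ ν) ∗ₘ μ = μ) ↔ g ^ 2 = 1 := by
  have hc : (2⁻¹ : ℝ≥0∞) ≠ 0 := by simp
  have hS : MeasurableSet ({1, g} : Set G) := (Set.toFinite _).measurableSet
  have hμS : ∀ᵐ z ∂μ, z ∈ ({1, g} : Set G) := by
    rw [hμ, ae_add_measure_iff, Measure.ae_ennreal_smul_measure_iff hc,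
      Measure.ae_ennreal_smul_measure_iff hc, ae_dirac_eq, ae_dirac_eq]
    simp
  constructor
  · rintro ⟨ν, hν, -, hfix⟩
    have hfixS := hfix ▸ hμS
    rw [hμ] at hfixS
    obtain ⟨hρ1, hρg⟩ := (Measure.ae_mconv_smul_dirac_add_smul_dirac_iff hc hc _ _ _ hS).1 hfixS
    obtain ⟨h11, h1g⟩ := (Measure.ae_smul_dirac_add_smul_dirac_mconv_iff hc hc _ _ _
      (measurable_mul_const 1 hS)).1 hρ1
    obtain ⟨-, hgg⟩ := (Measure.ae_smul_dirac_add_smul_dirac_mconv_iff hc hc _ _ _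
      (measurable_mul_const g hS)).1 hρg
    obtain ⟨z, hz, hgz, hgzg⟩ := (h11.and (h1g.and hgg)).exists
    exact sq_eq_one_of_mem_pair (by simpa using hz) (by simpa using hgz) hgzg
  · intro hg
    have : IsProbabilityMeasure μ := ⟨by simp [hμ, ENNReal.inv_two_add_inv_two]⟩
    have hμμ : μ ∗ₘ μ = μ := hμ ▸ Measure.half_dirac_add_half_dirac_mconv_self hg
    refine ⟨μ, inferInstance, ?_, by rw [hμμ, hμμ]⟩
    exact Measure.Regular.of_finite_of_measure_compl_eq_zero (Set.toFinite {1, g})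
      (mem_ae_iff.1 hμS)

/-- In a compact Hausdorff topological group `G`, the measure `μ = (1/2)(δ_e + δ_g)` has a
generalized inverse in `P(G)` if and only if `g² = e`. -/
theorem half_dirac_regular_iff_sq_eq_one {G : Type*} [Group G] [TopologicalSpace G]
    [IsTopologicalGroup G] [CompactSpace G] [T2Space G] [MeasurableSpace G] [BorelSpace G]
    (g : G) (μ : Measure G)
    (hμ : μ = (2⁻¹ : ℝ≥0∞) • Measure.dirac (1 : G) + (2⁻¹ : ℝ≥0∞) • Measure.dirac g) :
    (∃ ν : Measure G, IsProbabilityMeasure ν ∧ ν.Regular ∧ (μ ∗ₘ ν) ∗ₘ μ = μ) ↔ g ^ 2 = 1 :=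
  half_dirac_regular_iff_sq_eq_one_general g μ hμ
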